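/- For every integer n ≥ 4, every field F of characteristic zero, and any three derivations D_1, D_2, D_3 of the Lie algebra n_{n,1}, there exist scalars (c_1, c_2, c_3) ∈ F³, not all zero, such that the linear map c_1 D_1 + c_2 D_2 + c_3 D_3 is a nilpotent endomorphism of n_{n,1}. (Consequently, at most two linearly nil-independent derivations can be added to n_{n,1} when extending it to a solvable Lie algebra.) -/

import Mathlib

/-- The family `e 1, …, e n` is a basis of `L` realizing the Lie brackets of the
nilpotent Lie algebra `n_{n,1}`. -/
def IsNn1Basis (F : Type*) [Field F] (n : ℕ) {L : Type*} [LieRing L] [LieAlgebra F L]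
    (e : ℕ → L) : Prop :=
  LinearIndependent F (fun i : Fin n => e (i.val + 1)) ∧
  Submodule.span F (Set.range (fun i : Fin n => e (i.val + 1))) = ⊤ ∧
  (∀ j k : ℕ, 1 ≤ j → j ≤ n - 1 → 1 ≤ k → k ≤ n - 1 → ⁅e j, e k⁆ = 0) ∧
  ⁅e 1, e n⁆ = 0 ∧
  (∀ k : ℕ, 2 ≤ k → k ≤ n - 1 → ⁅e k, e n⁆ = e (k - 1))

/-!
Let `D` be a derivation, `μ` the `e n`-coefficient of `D (e n)` and `λ` the `e (n-1)`-coefficient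
of `D (e (n-1))`. The Leibniz rule on `⁅e k, e n⁆ = e (k-1)` gives
`D (e (k-1)) = ⁅D (e k), e n⁆ + μ • e (k-1)`, and on `⁅e (n-1), e (n-2)⁆ = 0` it shows
that `D (e (n-1))` has no `e n`-component (this is where `n ≥ 4` enters: `e (n-3) ≠ 0`).
So when `μ = λ = 0`, `D` maps every `e k` into the span of `e 1, …, e (k-1)` and is nilpotent.
Since `D ↦ (μ, λ)` is linear with values in `F × F`, it kills a nontrivial combination of any
three derivations.
-/

open Module Submodule Set

theorem LinearMap.exists_ne_zero_map_sum_smul_eq_zero {K V W ι : Type*} [Field K]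
    [AddCommGroup V] [Module K V] [AddCommGroup W] [Module K W] [FiniteDimensional K W]
    [Fintype ι] (f : V →ₗ[K] W) (v : ι → V) (h : finrank K W < Fintype.card ι) :
    ∃ c : ι → K, c ≠ 0 ∧ f (∑ i, c i • v i) = 0 := by
  have hker : ker (f ∘ₗ Fintype.linearCombination K v) ≠ ⊥ :=
    ker_ne_bot_of_finrank_lt (by rwa [finrank_fintype_fun_eq_card])
  obtain ⟨c, hc, hc0⟩ := (Submodule.ne_bot_iff _).mp hker
  exact ⟨c, hc0, by simpa [Fintype.linearCombination_apply] using hc⟩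

section Flag

variable (R : Type*) {M : Type*} [Semiring R] [AddCommMonoid M] [Module R M]

def flagOf (e : ℕ → M) (k : ℕ) : Submodule R M := span R (e '' Icc 1 k)

variable {R} {e : ℕ → M}

theorem flagOf_mono : Monotone (flagOf R e) := fun _ _ h =>
  span_mono (image_mono (Icc_subset_Icc_right h))

theorem mem_flagOf {j k : ℕ} (h1 : 1 ≤ j) (h2 : j ≤ k) : e j ∈ flagOf R e k :=
  subset_span (mem_image_of_mem e ⟨h1, h2⟩)

theorem pow_apply_eq_zero_of_apply_mem_flagOf (f : Module.End R M) {k : ℕ}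
    (hf : ∀ j, 1 ≤ j → j ≤ k → f (e j) ∈ flagOf R e (j - 1)) {x : M}
    (hx : x ∈ flagOf R e k) : (f ^ k) x = 0 := by
  induction k generalizing x with
  | zero => simpa [flagOf] using hx
  | succ k ih =>
    have hmaps : flagOf R e (k + 1) ≤ (flagOf R e k).comap f := by
      refine span_le.mpr (image_subset_iff.mpr fun j ⟨h1, h2⟩ => ?_)
      exact flagOf_mono (by omega) (hf j h1 h2)
    rw [pow_succ, Module.End.mul_apply]
    exact ih (fun j h1 h2 => hf j h1 (by omega)) (hmaps hx)

theorem isNilpotent_of_apply_mem_flagOf (f : Module.End R M) {n : ℕ}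
    (htop : flagOf R e n = ⊤)
    (hf : ∀ j, 1 ≤ j → j ≤ n → f (e j) ∈ flagOf R e (j - 1)) :
    IsNilpotent f :=
  ⟨n, LinearMap.ext fun _ => pow_apply_eq_zero_of_apply_mem_flagOf f hf (htop ▸ mem_top)⟩

end Flag

def LieDerivation.ofLeibniz {R L : Type*} [CommRing R] [LieRing L] [LieAlgebra R L]
    (D : Module.End R L) (h : ∀ x y : L, D ⁅x, y⁆ = ⁅D x, y⁆ + ⁅x, D y⁆) :
    LieDerivation R L L where
  toLinearMap := D
  leibniz' a b := by rw [h, ← lie_skew b (D a)]; abel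

@[simp]
theorem LieDerivation.coe_ofLeibniz {R L : Type*} [CommRing R] [LieRing L] [LieAlgebra R L]
    (D : Module.End R L) (h : ∀ x y : L, D ⁅x, y⁆ = ⁅D x, y⁆ + ⁅x, D y⁆) :
    (LieDerivation.ofLeibniz D h : Module.End R L) = D :=
  rfl

namespace IsNn1Basis

variable {F : Type*} [Field F] {n : ℕ} {L : Type*} [LieRing L] [LieAlgebra F L] {e : ℕ → L}

noncomputable def basis (he : IsNn1Basis F n e) : Basis (Fin n) F L := .mk he.1 he.2.1.ge

theorem basis_apply (he : IsNn1Basis F n e) (i : Fin n) : he.basis i = e (i + 1) :=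
  Basis.mk_apply _ _ _

-- The coordinate along `e k`; junk value `0` unless `1 ≤ k ≤ n`.
noncomputable def coeff (he : IsNn1Basis F n e) (k : ℕ) : L →ₗ[F] F :=
  if h : 1 ≤ k ∧ k ≤ n then he.basis.coord ⟨k - 1, by omega⟩ else 0

theorem coeff_e (he : IsNn1Basis F n e) {j : ℕ} (h1 : 1 ≤ j) (h2 : j ≤ n) (k : ℕ) :
    he.coeff k (e j) = if k = j then 1 else 0 := by
  have hej : e j = he.basis ⟨j - 1, by omega⟩ := by rw [basis_apply, Fin.val_mk]; congr; omega
  by_cases hk : 1 ≤ k ∧ k ≤ n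
  · rw [coeff, dif_pos hk, hej, Basis.coord_apply, Basis.repr_self, Finsupp.single_apply]
    simp only [Fin.ext_iff]
    split_ifs <;> first | rfl | omega
  · rw [coeff, dif_neg hk, if_neg (by omega), LinearMap.zero_apply]

theorem mem_flagOf_iff (he : IsNn1Basis F n e) {k : ℕ} (hk : k ≤ n) {x : L} :
    x ∈ flagOf F e k ↔ ∀ j, k < j → j ≤ n → he.coeff j x = 0 := by
  have himage : e '' Icc 1 k = he.basis '' {i | (i : ℕ) < k} := by
    ext y
    constructor
    · rintro ⟨j, ⟨h1, h2⟩, rfl⟩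
      refine ⟨⟨j - 1, by omega⟩, show j - 1 < k by omega, ?_⟩
      rw [basis_apply, Fin.val_mk]
      congr
      omega
    · rintro ⟨i, hi, rfl⟩
      exact ⟨i + 1, ⟨by omega, by rw [mem_ofPred_eq] at hi; omega⟩, (he.basis_apply i).symm⟩
  rw [flagOf, himage, Basis.mem_span_image]
  constructor
  · intro hsupp j hkj hjn
    rw [coeff, dif_pos ⟨by omega, hjn⟩, Basis.coord_apply]
    by_contra hne
    have := hsupp (Finsupp.mem_support_iff.mpr hne)
    rw [mem_ofPred_eq, Fin.val_mk] at this
    omega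
  · intro hcoeff i hi
    by_contra hik
    have := hcoeff (i + 1) (by rw [mem_ofPred_eq] at hik; omega) (by omega)
    rw [coeff, dif_pos ⟨by omega, by omega⟩, Basis.coord_apply] at this
    exact Finsupp.mem_support_iff.mp hi (by simpa using this)

theorem e_ne_zero (he : IsNn1Basis F n e) {k : ℕ} (h1 : 1 ≤ k) (h2 : k ≤ n) : e k ≠ 0 := by
  simpa [basis_apply, show k - 1 + 1 = k by omega]
    using he.basis.ne_zero (⟨k - 1, by omega⟩ : Fin n)

theorem flagOf_eq_top (he : IsNn1Basis F n e) : flagOf F e n = ⊤ :=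
  eq_top_iff.mpr fun _ _ => (he.mem_flagOf_iff le_rfl).mpr fun _ h1 h2 => absurd h2 (by omega)

theorem sub_coeff_smul_mem_flagOf (he : IsNn1Basis F n e) {k : ℕ} (h1 : 1 ≤ k) (h2 : k ≤ n)
    {x : L} (hx : x ∈ flagOf F e k) : x - he.coeff k x • e k ∈ flagOf F e (k - 1) := by
  rw [he.mem_flagOf_iff (by omega)]
  intro j hkj hjn
  obtain rfl | hkj : j = k ∨ k < j := by omega
  · simp [he.coeff_e h1 h2]
  · simp [he.coeff_e h1 h2, (he.mem_flagOf_iff h2).mp hx j hkj hjn, show j ≠ k by omega]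

theorem lie_e_eq_zero_of_mem_flagOf (he : IsNn1Basis F n e) {k : ℕ} (h1 : 1 ≤ k)
    (h2 : k ≤ n - 1) {z : L} (hz : z ∈ flagOf F e (n - 1)) : ⁅e k, z⁆ = 0 := by
  have hle : flagOf F e (n - 1) ≤ LinearMap.ker (LieModule.toEnd F L L (e k)) :=
    span_le.mpr (image_subset_iff.mpr fun j ⟨hj1, hj2⟩ => he.2.2.1 k j h1 h2 hj1 hj2)
  exact hle hz

theorem lie_e_last_mem_flagOf (he : IsNn1Basis F n e) {k : ℕ} (hk : k ≤ n) {z : L}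
    (hz : z ∈ flagOf F e k) :
    ⁅z, e n⁆ ∈ flagOf F e (k - 1) := by
  have hle : flagOf F e k ≤ (flagOf F e (k - 1)).comap (LieModule.toEnd F L L (e n)) := by
    refine span_le.mpr (image_subset_iff.mpr fun j ⟨hj1, hj2⟩ => ?_)
    simp only [mem_preimage, SetLike.mem_coe, mem_comap, LieModule.toEnd_apply_apply]
    rw [← lie_skew]
    refine neg_mem ?_
    obtain rfl | rfl | ⟨hj2, hjn⟩ : j = 1 ∨ j = n ∨ (2 ≤ j ∧ j ≤ n - 1) := by omega
    · simp [he.2.2.2.1]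
    · simp
    · rw [he.2.2.2.2 j hj2 hjn]
      exact mem_flagOf (by omega) (by omega)
  rw [← lie_skew]
  exact neg_mem (hle hz)

noncomputable def diagEntry (he : IsNn1Basis F n e) (k : ℕ) : Module.End F L →ₗ[F] F :=
  he.coeff k ∘ₗ LinearMap.applyₗ (e k)

variable (D : LieDerivation F L L)

theorem apply_e_sub_one (he : IsNn1Basis F n e) (hlast : D (e n) ∈ flagOf F e (n - 1)) {k : ℕ}
    (h1 : 2 ≤ k) (h2 : k ≤ n - 1) : D (e (k - 1)) = ⁅D (e k), e n⁆ := by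
  rw [← he.2.2.2.2 k h1 h2, D.apply_lie_eq_add,
    he.lie_e_eq_zero_of_mem_flagOf (by omega) h2 hlast, zero_add]

theorem coeff_last_apply_e_penultimate (he : IsNn1Basis F n e) (hn : 4 ≤ n)
    (hlast : D (e n) ∈ flagOf F e (n - 1)) : he.coeff n (D (e (n - 1))) = 0 := by
  set c := he.coeff n (D (e (n - 1)))
  have hz := he.sub_coeff_smul_mem_flagOf (k := n) (by omega) le_rfl
    (he.flagOf_eq_top ▸ mem_top : D (e (n - 1)) ∈ flagOf F e n)
  have hDe : D (e (n - 2)) ∈ flagOf F e (n - 1) := by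
    rw [show n - 2 = n - 1 - 1 by omega, he.apply_e_sub_one D hlast (by omega) le_rfl]
    exact flagOf_mono (by omega) (he.lie_e_last_mem_flagOf le_rfl (he.flagOf_eq_top ▸ mem_top))
  have hleib := D.apply_lie_eq_add (e (n - 1)) (e (n - 2))
  rw [he.2.2.1 _ _ (by omega) le_rfl (by omega) (by omega), map_zero,
    he.lie_e_eq_zero_of_mem_flagOf (by omega) le_rfl hDe, zero_add] at hleib
  have hbracket : ⁅D (e (n - 1)), e (n - 2)⁆ = -(c • e (n - 3)) := by
    calc ⁅D (e (n - 1)), e (n - 2)⁆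
        = c • ⁅e n, e (n - 2)⁆ + ⁅D (e (n - 1)) - c • e n, e (n - 2)⁆ := by
          rw [← smul_lie, ← add_lie, add_sub_cancel]
      _ = -(c • e (n - 3)) := by
          rw [← lie_skew (e n), he.2.2.2.2 (n - 2) (by omega) (by omega),
            ← lie_skew _ (e (n - 2)), he.lie_e_eq_zero_of_mem_flagOf (by omega) (by omega) hz,
            show n - 2 - 1 = n - 3 by omega]
          simp
  rw [hbracket, eq_comm, neg_eq_zero] at hleib
  exact (smul_eq_zero.mp hleib).resolve_right (he.e_ne_zero (by omega) (by omega))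

theorem apply_e_mem_flagOf (he : IsNn1Basis F n e) (hn : 4 ≤ n)
    (hlast : D (e n) ∈ flagOf F e (n - 1)) (hpenult : he.coeff (n - 1) (D (e (n - 1))) = 0)
    {k : ℕ} (h1 : 1 ≤ k) (h2 : k ≤ n - 1) : D (e k) ∈ flagOf F e (k - 1) := by
  suffices h : ∀ m, m ≤ n - 2 → D (e (n - 1 - m)) ∈ flagOf F e (n - 2 - m) by
    simpa [show n - 1 - (n - 1 - k) = k by omega, show n - 2 - (n - 1 - k) = k - 1 by omega]
      using h (n - 1 - k) (by omega)
  intro m hm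
  induction m with
  | zero =>
    refine (he.mem_flagOf_iff (by omega)).mpr fun j hj hjn => ?_
    obtain rfl | rfl : j = n - 1 ∨ j = n := by omega
    · exact hpenult
    · exact he.coeff_last_apply_e_penultimate D hn hlast
  | succ m ih =>
    rw [show n - 1 - (m + 1) = n - 1 - m - 1 by omega,
      he.apply_e_sub_one D hlast (by omega) (by omega),
      show n - 2 - (m + 1) = n - 2 - m - 1 by omega]
    exact he.lie_e_last_mem_flagOf (by omega) (ih (by omega))

theorem isNilpotent_of_diagEntry_eq_zero (he : IsNn1Basis F n e) (hn : 4 ≤ n)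
    (hlast : he.diagEntry n D = 0) (hpenult : he.diagEntry (n - 1) D = 0) :
    IsNilpotent (D : Module.End F L) := by
  have hDn : D (e n) ∈ flagOf F e (n - 1) := by
    refine (he.mem_flagOf_iff (by omega)).mpr fun j h1 h2 => ?_
    obtain rfl : j = n := by omega
    exact hlast
  refine isNilpotent_of_apply_mem_flagOf _ he.flagOf_eq_top fun j h1 h2 => ?_
  obtain rfl | hj : j = n ∨ j ≤ n - 1 := by omega
  · exact hDn
  · exact he.apply_e_mem_flagOf D hn hDn hpenult h1 hj

end IsNn1Basis

theorem nn1_three_derivations_nil_dependent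
    (F : Type*) [Field F] (n : ℕ) (hn : 4 ≤ n)
    (L : Type*) [LieRing L] [LieAlgebra F L] (e : ℕ → L)
    (he : IsNn1Basis F n e)
    (D₁ D₂ D₃ : Module.End F L)
    (hD₁ : ∀ x y : L, D₁ ⁅x, y⁆ = ⁅D₁ x, y⁆ + ⁅x, D₁ y⁆)
    (hD₂ : ∀ x y : L, D₂ ⁅x, y⁆ = ⁅D₂ x, y⁆ + ⁅x, D₂ y⁆)
    (hD₃ : ∀ x y : L, D₃ ⁅x, y⁆ = ⁅D₃ x, y⁆ + ⁅x, D₃ y⁆) :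
    ∃ c₁ c₂ c₃ : F, ¬(c₁ = 0 ∧ c₂ = 0 ∧ c₃ = 0) ∧
      IsNilpotent (c₁ • D₁ + c₂ • D₂ + c₃ • D₃) := by
  let δ : Fin 3 → LieDerivation F L L :=
    ![.ofLeibniz D₁ hD₁, .ofLeibniz D₂ hD₂, .ofLeibniz D₃ hD₃]
  obtain ⟨c, hc, hker⟩ := LinearMap.exists_ne_zero_map_sum_smul_eq_zero
    ((he.diagEntry n).prod (he.diagEntry (n - 1)) ∘ₗ
      (LieDerivation.toLinearMapLieHom F L : LieDerivation F L L →ₗ[F] Module.End F L)) δ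
    (by simp)
  refine ⟨c 0, c 1, c 2, fun ⟨h0, h1, h2⟩ => hc (funext fun i => ?_), ?_⟩
  · fin_cases i <;> assumption
  have := he.isNilpotent_of_diagEntry_eq_zero (∑ i, c i • δ i) hn
    (congrArg Prod.fst hker) (congrArg Prod.snd hker)
  simpa [Fin.sum_univ_three, δ] using this
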